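/- arXiv:1009.1565 — 2 statements merged into one kernel-verified Lean document; each statement's English description precedes it below -/
import Mathlib

section
/- Let X be a compact metric space, A a family of subsets of X, ∼_A the finest closed equivalence relation respecting A, and ψ : X → X/∼_A the quotient map. If f : X → X is continuous and sends each element of A into a single ∼_A-class, then there is a continuous map g : X/∼_A → X/∼_A with ψ ∘ f = g ∘ ψ. -/
open Set Filter Metric Topology Function

/-- A relation on a topological space is closed if its graph is closed. -/
def ClosedRel {Y : Type*} [TopologicalSpace Y] (r : Y → Y → Prop) : Prop :=
  IsClosed {p : Y × Y | r p.1 p.2}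

/-- A relation respects a family `A` of subsets if it is closed and each member of `A`
is contained in a single class. -/
def Respects {Y : Type*} [TopologicalSpace Y] (A : Set (Set Y)) (r : Y → Y → Prop) : Prop :=
  ClosedRel r ∧ ∀ a ∈ A, ∀ x ∈ a, ∀ y ∈ a, r x y

/-- The finest closed equivalence relation respecting `A`: the intersection of all
closed equivalence relations respecting `A`. -/
def finestRel {Y : Type*} [TopologicalSpace Y] (A : Set (Set Y)) : Y → Y → Prop :=
  fun x y => ∀ r : Y → Y → Prop, Equivalence r → Respects A r → r x y

/-- A limit continuum: a subcontinuum which is the Hausdorff limit of a sequence of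
pairwise disjoint subcontinua. -/
def IsLimCont {Y : Type*} [MetricSpace Y] (C : Set Y) : Prop :=
  IsCompact C ∧ IsConnected C ∧
  ∃ F : ℕ → Set Y, (∀ n, IsCompact (F n) ∧ IsConnected (F n)) ∧
    Pairwise (Disjoint on F) ∧
    Tendsto (fun n => EMetric.hausdorffEdist (F n) C) atTop (nhds 0)

/-- Finitely Suslinian: every family of pairwise disjoint subcontinua of diameter at least
`ε > 0` is finite. -/
def FinSus (Y : Type*) [MetricSpace Y] : Prop :=
  ∀ ε : ℝ, 0 < ε → ∀ S : Set (Set Y),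
    (∀ C ∈ S, IsCompact C ∧ IsConnected C ∧ ε ≤ Metric.diam C) →
    S.Pairwise Disjoint → S.Finite

/-- A subcontinuum of the subset `Z`. -/
def SubcontIn {E : Type*} [MetricSpace E] (Z C : Set E) : Prop :=
  C ⊆ Z ∧ IsCompact C ∧ IsConnected C

/-- A limit continuum of the subset `Z`. -/
def LimContIn {E : Type*} [MetricSpace E] (Z C : Set E) : Prop :=
  SubcontIn Z C ∧ ∃ F : ℕ → Set E, (∀ n, SubcontIn Z (F n)) ∧
    Pairwise (Disjoint on F) ∧
    Tendsto (fun n => EMetric.hausdorffEdist (F n) C) atTop (nhds 0)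

/-- The subset `Z` is finitely Suslinian. -/
def FinSusIn {E : Type*} [MetricSpace E] (Z : Set E) : Prop :=
  ∀ ε : ℝ, 0 < ε → ∀ S : Set (Set E),
    (∀ C ∈ S, SubcontIn Z C ∧ ε ≤ Metric.diam C) → S.Pairwise Disjoint → S.Finite

/-- A planar compactum is unshielded if it is the boundary of the unbounded component of
its complement. -/
def Unshielded (X : Set ℂ) : Prop :=
  ∀ z, z ∉ X → ¬Bornology.IsBounded (connectedComponentIn Xᶜ z) →
    X = frontier (connectedComponentIn Xᶜ z)

section finestRel

variable {Y : Type*} [TopologicalSpace Y] (A : Set (Set Y))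

theorem equivalence_finestRel : Equivalence (finestRel A) where
  refl _ _ hr _ := hr.refl _
  symm h r hr hA := hr.symm (h r hr hA)
  trans h₁ h₂ r hr hA := hr.trans (h₁ r hr hA) (h₂ r hr hA)

theorem closedRel_finestRel : ClosedRel (finestRel A) := by
  simp only [ClosedRel, finestRel, ofPred_forall]
  exact isClosed_iInter fun _ => isClosed_iInter fun _ => isClosed_iInter fun hA => hA.1

end finestRel

theorem ClosedRel.comap {Y Z : Type*} [TopologicalSpace Y] [TopologicalSpace Z]
    {r : Z → Z → Prop} (hr : ClosedRel r) {f : Y → Z} (hf : Continuous f) :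
    ClosedRel (r on f) :=
  hr.preimage (hf.prodMap hf)

/-- The pull-back of `finestRel A` along `f` is a closed equivalence relation respecting `A`,
hence coarser than `finestRel A`. -/
theorem finestRel.map {Y : Type*} [TopologicalSpace Y] {A : Set (Set Y)} {f : Y → Y}
    (hf : Continuous f) (hfA : ∀ a ∈ A, ∀ x ∈ a, ∀ y ∈ a, finestRel A (f x) (f y))
    {x y : Y} (hxy : finestRel A x y) : finestRel A (f x) (f y) :=
  hxy (finestRel A on f) ((equivalence_finestRel A).comap f)
    ⟨(closedRel_finestRel A).comap hf, hfA⟩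

theorem finestRel_induced_map_general {X : Type*} [MetricSpace X]
    (A : Set (Set X)) (s : Setoid X) (hs : ∀ x y, s.r x y ↔ finestRel A x y)
    (f : X → X) (hf : Continuous f)
    (hfA : ∀ a ∈ A, ∀ x ∈ a, ∀ y ∈ a, finestRel A (f x) (f y)) :
    ∃ g : Quotient s → Quotient s, Continuous g ∧
      (Quotient.mk s) ∘ f = g ∘ (Quotient.mk s) := by
  have hfs : ∀ ⦃x y⦄, s x y → s (f x) (f y) := fun x y hxy =>
    (hs _ _).2 (finestRel.map hf hfA ((hs x y).1 hxy))
  exact ⟨Quotient.map' f hfs, hf.quotient_map' hfs, rfl⟩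

/-- a continuous self-map sending each element of `A` into a single class of
the finest closed equivalence relation respecting `A` induces a continuous map of the
quotient. -/
theorem finestRel_induced_map {X : Type*} [MetricSpace X] [CompactSpace X]
    (A : Set (Set X)) (s : Setoid X) (hs : ∀ x y, s.r x y ↔ finestRel A x y)
    (f : X → X) (hf : Continuous f)
    (hfA : ∀ a ∈ A, ∀ x ∈ a, ∀ y ∈ a, finestRel A (f x) (f y)) :
    ∃ g : Quotient s → Quotient s, Continuous g ∧
      (Quotient.mk s) ∘ f = g ∘ (Quotient.mk s) :=
  finestRel_induced_map_general A s hs f hf hfA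
end

section
/- Let X be a compact metric space and let ∼ be an upper semi-continuous (closed) equivalence relation on X. Then the equivalence relation ∼' whose classes are the connected components of ∼-classes is also a closed equivalence relation on X. -/
open Set Filter Metric Topology Function

/-! If `x ∼ y` but `y` is not in the component of `x` in the compact class `K` of `x`, a clopen
subset of `K` splits it, giving disjoint open sets `V ∋ x`, `W ∋ y` with `K ⊆ V ∪ W`. By upper
semi-continuity every class near `K` still lies in `V ∪ W`, so for `x'` near `x` the component of
`x'` in its class stays inside `V` and misses every `y'` near `y`. -/

namespace ClosedRel

variable {X : Type*} [TopologicalSpace X] {r : X → X → Prop}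

theorem isClosed_setOf_rel (hrc : ClosedRel r) (x : X) : IsClosed {z | r x z} :=
  hrc.preimage (Continuous.prodMk_right x)

theorem isOpen_setOf_setOf_subset [CompactSpace X] (hrc : ClosedRel r) {O : Set X}
    (hO : IsOpen O) : IsOpen {x | {z | r x z} ⊆ O} := by
  have hcompl : {x | {z | r x z} ⊆ O}ᶜ = Prod.fst '' ({p : X × X | r p.1 p.2} ∩ univ ×ˢ Oᶜ) := by
    ext x
    simp [not_subset]
  rw [← isClosed_compl_iff, hcompl]
  exact isClosedMap_fst_of_compactSpace _ (hrc.inter (isClosed_univ.prod hO.isClosed_compl))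

end ClosedRel

theorem exists_isOpen_separation_of_notMem_connectedComponentIn {X : Type*}
    [TopologicalSpace X] [T2Space X] {K : Set X} (hK : IsCompact K) {x y : X}
    (hx : x ∈ K) (hy : y ∈ K) (hxy : y ∉ connectedComponentIn K x) :
    ∃ V W : Set X, IsOpen V ∧ IsOpen W ∧ Disjoint V W ∧ K ⊆ V ∪ W ∧ x ∈ V ∧ y ∈ W := by
  have : CompactSpace K := isCompact_iff_compactSpace.mp hK
  obtain ⟨⟨Z, hZ, hxZ⟩, hyZ⟩ : ∃ Z : {Z : Set K // IsClopen Z ∧ ⟨x, hx⟩ ∈ Z}, ⟨y, hy⟩ ∉ Z.1 := by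
    have hy' : (⟨y, hy⟩ : K) ∉ connectedComponent (⟨x, hx⟩ : K) := fun h =>
      hxy (connectedComponentIn_eq_image hx ▸ Set.mem_image_of_mem _ h)
    simpa [connectedComponent_eq_iInter_isClopen, and_assoc] using hy'
  obtain ⟨V, W, hV, hW, hZV, hZW, hVW⟩ := SeparatedNhds.of_isCompact_isCompact
    (hZ.isClosed.isCompact.image continuous_subtype_val)
    (hZ.compl.isClosed.isCompact.image continuous_subtype_val)
    ((disjoint_image_iff Subtype.val_injective).2 disjoint_compl_right)
  refine ⟨V, W, hV, hW, hVW, fun z hz => ?_, hZV ⟨_, hxZ, rfl⟩, hZW ⟨_, hyZ, rfl⟩⟩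
  by_cases hzZ : (⟨z, hz⟩ : K) ∈ Z
  exacts [Or.inl (hZV ⟨_, hzZ, rfl⟩), Or.inr (hZW ⟨_, hzZ, rfl⟩)]

theorem Equivalence.setOf_eq_setOf {X : Type*} {r : X → X → Prop} (hre : Equivalence r)
    {x y : X} (h : r x y) : {z | r x z} = {z | r y z} :=
  Set.ext fun _ => ⟨hre.trans (hre.symm h), hre.trans h⟩

section componentRel

variable {X : Type*} [TopologicalSpace X] {r : X → X → Prop}

/-- The relation `∼'` whose classes are the connected components of the `r`-classes. -/
def componentRel (r : X → X → Prop) (x y : X) : Prop :=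
  r x y ∧ y ∈ connectedComponentIn {z | r x z} x

theorem componentRel.connectedComponentIn_eq (hre : Equivalence r) {x y : X}
    (h : componentRel r x y) :
    connectedComponentIn {z | r y z} y = connectedComponentIn {z | r x z} x := by
  rw [← hre.setOf_eq_setOf h.1, ← _root_.connectedComponentIn_eq h.2]

theorem equivalence_componentRel (hre : Equivalence r) : Equivalence (componentRel r) where
  refl x := ⟨hre.refl x, mem_connectedComponentIn (hre.refl x)⟩
  symm {x _} h := ⟨hre.symm h.1,
    h.connectedComponentIn_eq hre ▸ mem_connectedComponentIn (hre.refl x)⟩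
  trans hxy hyz := ⟨hre.trans hxy.1 hyz.1, hxy.connectedComponentIn_eq hre ▸ hyz.2⟩

theorem closedRel_componentRel [T2Space X] [CompactSpace X] (hre : Equivalence r)
    (hrc : ClosedRel r) : ClosedRel (componentRel r) := by
  rw [ClosedRel, ← isOpen_compl_iff, isOpen_iff_mem_nhds]
  rintro ⟨x, y⟩ hxy
  by_cases hr : r x y
  · obtain ⟨V, W, hV, hW, hVW, hclassVW, hxV, hyW⟩ :=
      exists_isOpen_separation_of_notMem_connectedComponentIn
        (hrc.isClosed_setOf_rel x).isCompact (hre.refl x) hr fun h => hxy ⟨hr, h⟩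
    have hN := hrc.isOpen_setOf_setOf_subset (hV.union hW)
    filter_upwards [prod_mem_nhds (inter_mem (hN.mem_nhds hclassVW) (hV.mem_nhds hxV))
      (hW.mem_nhds hyW)]
    rintro ⟨x', y'⟩ ⟨⟨hx'N, hx'V⟩, hy'W⟩ ⟨-, hy'⟩
    have hcomponentV : connectedComponentIn {z | r x' z} x' ⊆ V :=
      isPreconnected_connectedComponentIn.subset_left_of_subset_union hV hW hVW
        ((connectedComponentIn_subset _ _).trans hx'N)
        ⟨x', mem_connectedComponentIn (hre.refl x'), hx'V⟩
    exact disjoint_left.1 hVW (hcomponentV hy') hy'W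
  · filter_upwards [hrc.isOpen_compl.mem_nhds hr] with p hp h using hp h.1

end componentRel

/-- if `r` is a closed (upper semi-continuous) equivalence relation on a
compactum, then the relation whose classes are the connected components of `r`-classes is
also a closed equivalence relation. -/
theorem components_of_closed_equivalence
    {X : Type*} [MetricSpace X] [CompactSpace X]
    (r : X → X → Prop) (hre : Equivalence r) (hrc : ClosedRel r) :
    Equivalence (fun x y => r x y ∧ y ∈ connectedComponentIn {z | r x z} x) ∧
    ClosedRel (fun x y => r x y ∧ y ∈ connectedComponentIn {z | r x z} x) :=
  ⟨equivalence_componentRel hre, closedRel_componentRel hre hrc⟩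
end
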